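/- arXiv:2403.05113 — 3 statements merged into one kernel-verified Lean document; each statement's English description precedes it below -/
import Mathlib

section
/- For every permutation π in S_n, applying West's stack-sorting map s at most n-1 times yields the identity permutation: s^{n-1}(π) = id. -/
/-- West's stack-sorting map, implemented with an explicit stack (top = head). -/
def sWestAux : List ℕ → List ℕ → List ℕ
  | [], st => st
  | x :: xs, [] => sWestAux xs [x]
  | x :: xs, t :: st =>
      if t < x then t :: sWestAux (x :: xs) st
      else sWestAux xs (x :: t :: st)
termination_by l st => 2 * l.length + st.length

def sWest (l : List ℕ) : List ℕ := sWestAux l []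

/-- A word contains a subsequence equivalent to `aba`. -/
def HasABA (l : List ℕ) : Prop :=
  ∃ i j k : Fin l.length, i < j ∧ j < k ∧ l.get i = l.get k ∧ l.get j ≠ l.get i

instance (l : List ℕ) : Decidable (HasABA l) := by
  unfold HasABA; infer_instance

/-- Xia's stack-sorting map φ_{aba}, with explicit stack (top = head). -/
def phiAux : List ℕ → List ℕ → List ℕ
  | [], st => st
  | x :: xs, [] => phiAux xs [x]
  | x :: xs, t :: st =>
      if HasABA (x :: t :: st) then t :: phiAux (x :: xs) st
      else phiAux xs (x :: t :: st)
termination_by l st => 2 * l.length + st.length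

def phi (p : List ℕ) : List ℕ := phiAux p []

/-- A set partition word is sorted: all occurrences of each letter are consecutive. -/
def SortedWord (p : List ℕ) : Prop :=
  ∀ i j k : Fin p.length, i < j → j < k → p.get i = p.get k → p.get j = p.get i

/-- Number of distinct letters. -/
def Nletters (p : List ℕ) : ℕ := p.toFinset.card

def Avoids231 (l : List ℕ) : Prop :=
  ¬ ∃ i j k : Fin l.length, i < j ∧ j < k ∧ l.get k < l.get i ∧ l.get i < l.get j

/-!
The largest entry `m` empties the stack when it arrives and is popped only after the input is
exhausted, so `s (L ++ m :: R) = s L ++ s R ++ [m]`; in particular an entry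
larger than all others stays in last position under every later pass. Hence one pass turns a
permutation of `{0, …, n}` into `w ++ [n]` with `w` a permutation of `{0, …, n - 1}`, and
induction on `n` finishes.
-/

theorem sWestAux_perm (l st : List ℕ) : (sWestAux l st).Perm (st ++ l) := by
  induction l, st using sWestAux.induct with
  | case1 st => simp [sWestAux]
  | case2 x xs ih => simpa [sWestAux] using ih
  | case3 x xs t st h ih =>
    rw [sWestAux, if_pos h]
    exact (ih.cons t).trans (by simp)
  | case4 x xs t st h ih =>
    rw [sWestAux, if_neg h]
    exact ih.trans (by simpa using (List.perm_middle (l₁ := t :: st)).symm)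

theorem sWestAux_stack_append_max (l st : List ℕ) (m : ℕ) (hl : ∀ x ∈ l, x < m)
    (hst : ∀ x ∈ st, x < m) :
    sWestAux l (st ++ [m]) = sWestAux l st ++ [m] := by
  induction l, st using sWestAux.induct with
  | case1 st => simp [sWestAux]
  | case2 x xs ih =>
    have hx : x < m := hl x List.mem_cons_self
    rw [List.nil_append, sWestAux, sWestAux, if_neg (Nat.not_lt.mpr hx.le)]
    exact ih (fun y hy => hl y (.tail _ hy)) (by simpa using hx)
  | case3 x xs t st h ih =>
    rw [List.cons_append, sWestAux, if_pos h, sWestAux, if_pos h, List.cons_append,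
      ih hl (fun y hy => hst y (.tail _ hy))]
  | case4 x xs t st h ih =>
    rw [List.cons_append, sWestAux, if_neg h, sWestAux, if_neg h]
    exact ih (fun y hy => hl y (.tail _ hy)) (by simp_all)

theorem sWestAux_cons_of_forall_lt (R st : List ℕ) (m : ℕ) (hst : ∀ x ∈ st, x < m) :
    sWestAux (m :: R) st = st ++ sWestAux R [m] := by
  induction st with
  | nil => rw [sWestAux, List.nil_append]
  | cons t st ih =>
    rw [sWestAux, if_pos (hst t List.mem_cons_self), ih (fun y hy => hst y (.tail _ hy)),
      List.cons_append]

theorem sWestAux_append_cons (L R st : List ℕ) (m : ℕ) (hL : ∀ x ∈ L, x < m)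
    (hst : ∀ x ∈ st, x < m) :
    sWestAux (L ++ m :: R) st = sWestAux L st ++ sWestAux R [m] := by
  induction L, st using sWestAux.induct with
  | case1 st => rw [List.nil_append, sWestAux_cons_of_forall_lt R st m hst, sWestAux]
  | case2 x xs ih =>
    rw [List.cons_append, sWestAux, sWestAux]
    exact ih (fun y hy => hL y (.tail _ hy)) (by simpa using hL x List.mem_cons_self)
  | case3 x xs t st h ih =>
    rw [List.cons_append, sWestAux, if_pos h, sWestAux, if_pos h, List.cons_append]
    exact congrArg (t :: ·) (ih hL fun y hy => hst y (.tail _ hy))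
  | case4 x xs t st h ih =>
    rw [List.cons_append, sWestAux, if_neg h, sWestAux, if_neg h]
    exact ih (fun y hy => hL y (.tail _ hy)) (by simp_all)

theorem sWest_perm (l : List ℕ) : (sWest l).Perm l := by
  simpa [sWest] using sWestAux_perm l []

theorem sWest_append_cons (L R : List ℕ) (m : ℕ) (hL : ∀ x ∈ L, x < m)
    (hR : ∀ x ∈ R, x < m) :
    sWest (L ++ m :: R) = sWest L ++ sWest R ++ [m] := by
  rw [sWest, sWestAux_append_cons L R [] m hL (by simp), ← List.nil_append [m],
    sWestAux_stack_append_max R [] m hR (by simp), List.append_assoc]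
  rfl

theorem sWest_append_max (w : List ℕ) (m : ℕ) (hw : ∀ x ∈ w, x < m) :
    sWest (w ++ [m]) = sWest w ++ [m] := by
  simpa [sWest, sWestAux] using sWest_append_cons w [] m hw (by simp)

theorem sWest_iterate_append_max (j : ℕ) (w : List ℕ) (m : ℕ) (hw : ∀ x ∈ w, x < m) :
    sWest^[j] (w ++ [m]) = sWest^[j] w ++ [m] := by
  induction j generalizing w with
  | zero => rfl
  | succ j ih =>
    rw [Function.iterate_succ_apply, Function.iterate_succ_apply, sWest_append_max w m hw]
    exact ih (sWest w) fun x hx => hw x ((sWest_perm w).subset hx)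

theorem exists_sWest_eq_append_of_perm_range {n : ℕ} {l : List ℕ}
    (h : l.Perm (List.range (n + 1))) :
    ∃ w : List ℕ, sWest l = w ++ [n] ∧ w.Perm (List.range n) := by
  obtain ⟨L, R, rfl⟩ := List.append_of_mem (h.mem_iff.mpr (List.self_mem_range_succ))
  have hperm : (L ++ R).Perm (List.range n) := by
    refine (List.perm_cons n).mp (List.perm_middle.symm.trans (h.trans ?_))
    rw [List.range_succ]
    exact List.perm_append_singleton _ _
  have hlt : ∀ x ∈ L ++ R, x < n := fun x hx => List.mem_range.mp (hperm.subset hx)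
  refine ⟨sWest L ++ sWest R, ?_, ?_⟩
  · exact sWest_append_cons L R n (fun x hx => hlt x (List.mem_append_left R hx))
      fun x hx => hlt x (List.mem_append_right L hx)
  · exact ((sWest_perm L).append (sWest_perm R)).trans hperm

theorem sWest_iterate_perm_range_succ (n : ℕ) (l : List ℕ)
    (h : l.Perm (List.range (n + 1))) : sWest^[n] l = List.range (n + 1) := by
  induction n generalizing l with
  | zero => simpa using List.perm_singleton.mp h
  | succ k ih =>
    obtain ⟨w, hl, hw⟩ := exists_sWest_eq_append_of_perm_range h
    rw [Function.iterate_succ_apply, hl,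
      sWest_iterate_append_max k w (k + 1) fun x hx => List.mem_range.mp (hw.subset hx),
      ih w hw, ← List.range_succ]

/-- West's stack-sorting map sorts any permutation of length n in at most n-1 passes. -/
theorem stmt0 (n : ℕ) (l : List ℕ) (h : l.Perm (List.range n)) :
    sWest^[n - 1] l = List.range n := by
  cases n with
  | zero => simpa using h
  | succ n => exact sWest_iterate_perm_range_succ n l h
end

section
/- If p is a sorted set partition word, then φ_{aba}(p) is also sorted. -/
lemma hasABA_append (l s : List ℕ) (h : HasABA s) : HasABA (l ++ s) := by
  obtain ⟨i, j, k, hij, hjk, he, hne⟩ := h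
  refine ⟨⟨l.length + i, by simp only [List.length_append]; omega⟩, ⟨l.length + j, by simp only [List.length_append]; omega⟩,
    ⟨l.length + k, by simp only [List.length_append]; omega⟩, by simpa using hij, by simpa using hjk, ?_, ?_⟩ <;>
  · simp only [List.get_eq_getElem, List.getElem_append_right (Nat.le_add_right _ _),
      Nat.add_sub_cancel_left] at *
    simpa using ‹_›

lemma sorted_not_hasABA {l : List ℕ} (h : SortedWord l) : ¬ HasABA l := by
  rintro ⟨i, j, k, hij, hjk, he, hne⟩
  exact hne (h i j k hij hjk he)

lemma sortedWord_reverse {p : List ℕ} (h : SortedWord p) : SortedWord p.reverse := by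
  intro i j k hij hjk he
  have hi := i.2; have hj := j.2; have hk := k.2
  simp only [List.length_reverse] at hi hj hk
  have hij' : (i : ℕ) < j := hij
  have hjk' : (j : ℕ) < k := hjk
  simp only [List.get_eq_getElem, List.getElem_reverse] at he ⊢
  have h1 : p.length - 1 - (k:ℕ) < p.length - 1 - (j:ℕ) := by omega
  have h2 : p.length - 1 - (j:ℕ) < p.length - 1 - (i:ℕ) := by omega
  have := h ⟨p.length - 1 - (k:ℕ), by omega⟩ ⟨p.length - 1 - (j:ℕ), by omega⟩
    ⟨p.length - 1 - (i:ℕ), by omega⟩ h1 h2 (by simpa using he.symm)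
  simp only [List.get_eq_getElem] at this
  rw [this, he]

lemma phiAux_sorted : ∀ xs st : List ℕ, SortedWord (xs.reverse ++ st) →
    phiAux xs st = xs.reverse ++ st := by
  intro xs st
  induction xs, st using phiAux.induct with
  | case1 st => intro _; simp [phiAux]
  | case2 x xs ih =>
      intro h
      rw [phiAux, ih (by simpa using h)]
      simp
  | case3 x xs t st hA ih =>
      intro h
      exfalso
      apply sorted_not_hasABA h
      have := hasABA_append ((x::xs).reverse.dropLast) _ hA
      have heq : (x::xs).reverse.dropLast ++ (x :: t :: st) = (x::xs).reverse ++ (t :: st) := by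
        simp [List.dropLast_concat]
      rwa [heq] at this
  | case4 x xs t st hA ih =>
      intro h
      rw [phiAux, if_neg hA, ih]
      · simp
      · simpa using h

/-- φ_{aba} sends sorted words to sorted words. -/
theorem stmt5 (p : List ℕ) (h : SortedWord p) : SortedWord (phi p) := by
  have h1 := sortedWord_reverse h
  have h2 := phiAux_sorted p [] (by simpa using h1)
  unfold phi
  rw [h2]
  simpa using h1
end

section
/- For every set partition word p with N(p) distinct letters, the word φ_{aba}^{N(p)}(p) is sorted, i.e., applying the map φ_{aba} at most N(p) times sorts any set partition. -/
/-!
A letter whose occurrences in `p` are contiguous stays contiguous in `φ(p)`: its occurrences enter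
the stack as one run, and the run leaves the stack in one piece. If `p` is not sorted, let `a` be
the letter at the first position of `p` that is followed by a different letter and then by `a`
again, and `u` the prefix before that position. The prefix `u` is pushed without pops, its letters
never occur again, so it stays at the bottom of the stack with `a` just above it; every later `a`
pops the stack down to the run of `a`'s and joins it. So `a` is contiguous in `φ(p)`, i.e. each
pass repairs at least one split letter and splits none, and `N(p)` passes sort `p`.
-/

open List

def Split (a : ℕ) (l : List ℕ) : Prop := ∃ b, b ≠ a ∧ [a, b, a] <+ l

section Words

variable {a c x t : ℕ} {l l' u v : List ℕ}

theorem hasABA_iff_exists_split : HasABA l ↔ ∃ a, Split a l := by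
  constructor
  · rintro ⟨i, j, k, hij, hjk, hik, hji⟩
    refine ⟨l.get i, l.get j, hji, ?_⟩
    have hs := List.map_getElem_sublist (l := l) (is := [i, j, k])
      (by simp [hij, hjk, hij.trans hjk])
    simp only [get_eq_getElem] at hik
    simpa [hik] using hs
  · rintro ⟨a, b, hba, hs⟩
    obtain ⟨is, his, hpw⟩ := List.sublist_eq_map_getElem hs
    rcases is with _ | ⟨i, _ | ⟨j, _ | ⟨k, _ | ⟨_, _⟩⟩⟩⟩ <;> simp at his
    obtain ⟨hi, hj, hk⟩ := his
    simp only [pairwise_cons, mem_cons] at hpw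
    refine ⟨i, j, k, hpw.1 j (by simp), hpw.2.1 k (by simp), ?_, ?_⟩ <;>
      simp [← hi, ← hj, ← hk, hba]

theorem sortedWord_iff_not_hasABA {p : List ℕ} : SortedWord p ↔ ¬HasABA p := by
  simp only [SortedWord, HasABA, not_exists, not_and, ne_eq, not_not]

theorem Split.mono (h : l <+ l') : Split a l → Split a l' :=
  fun ⟨b, hb, hs⟩ => ⟨b, hb, hs.trans h⟩

theorem HasABA.mono (h : l <+ l') (hl : HasABA l) : HasABA l' := by
  obtain ⟨a, ha⟩ := hasABA_iff_exists_split.1 hl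
  exact hasABA_iff_exists_split.2 ⟨a, ha.mono h⟩

theorem Split.mem : Split a l → a ∈ l :=
  fun ⟨_, _, hs⟩ => hs.subset (by simp)

theorem split_reverse_iff : Split a l.reverse ↔ Split a l := by
  refine exists_congr fun b => and_congr_right fun _ => ?_
  rw [← reverse_sublist, reverse_reverse]
  rfl

theorem hasABA_reverse_iff : HasABA l.reverse ↔ HasABA l := by
  simp [hasABA_iff_exists_split, split_reverse_iff]

theorem split_cons_iff : Split a (c :: l) ↔ Split a l ∨ c = a ∧ ∃ b ≠ a, [b, a] <+ l := by
  simp only [Split, List.sublist_cons_iff, List.cons.injEq]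
  grind

theorem hasABA_cons_iff : HasABA (c :: l) ↔ HasABA l ∨ ∃ b ≠ c, [b, c] <+ l := by
  simp only [hasABA_iff_exists_split, split_cons_iff]
  grind

theorem not_hasABA_nil : ¬HasABA [] :=
  fun ⟨i, _⟩ => i.elim0

theorem not_hasABA_cons (hx : x ∉ l) (hl : ¬HasABA l) : ¬HasABA (x :: l) := by
  rw [hasABA_cons_iff]
  rintro (h | ⟨b, -, hs⟩)
  exacts [hl h, hx (hs.subset (by simp))]

theorem not_hasABA_singleton : ¬HasABA [x] :=
  not_hasABA_cons List.not_mem_nil not_hasABA_nil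

theorem hasABA_cons_cons_iff : HasABA (x :: t :: l) ↔ HasABA (t :: l) ∨ x ≠ t ∧ x ∈ l := by
  rw [hasABA_cons_iff]
  refine ⟨?_, ?_⟩
  · rintro (h | ⟨b, hb, hs⟩)
    · exact Or.inl h
    by_cases hxt : x = t
    · subst hxt
      exact Or.inl (hasABA_iff_exists_split.2 ⟨x, b, hb, (hs.of_cons_of_ne hb).cons_cons x⟩)
    · exact Or.inr ⟨hxt, (mem_cons.1 (hs.subset (by simp))).resolve_left hxt⟩
  · rintro (h | ⟨hxt, hx⟩)
    · exact Or.inl h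
    · exact Or.inr ⟨t, Ne.symm hxt, (singleton_sublist.2 hx).cons_cons t⟩

theorem List.Sublist.of_cons_sublist_append_of_notMem (h : a :: l <+ u ++ v) (hu : a ∉ u) :
    a :: l <+ v := by
  induction u with
  | nil => exact h
  | cons c u ih =>
    exact ih (h.of_cons_of_ne fun hac => hu (hac ▸ mem_cons_self))
      (fun ha => hu (mem_cons_of_mem c ha))

theorem not_split_append_replicate_append (hu : a ∉ u) (hv : a ∉ v) (k : ℕ) :
    ¬Split a (u ++ replicate k a ++ v) := by
  rintro ⟨b, hba, hs⟩
  have hs' : [a, b, a] <+ replicate k a ++ v := by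
    rw [append_assoc] at hs
    exact hs.of_cons_sublist_append_of_notMem hu
  have hs'' : [a, b, a] <+ reverse (replicate k a) := by
    rw [← reverse_sublist, reverse_append] at hs'
    exact hs'.of_cons_sublist_append_of_notMem (by simpa using hv)
  exact hba (eq_of_mem_replicate (by simpa using hs''.subset (by simp : b ∈ [a, b, a])))

theorem exists_eq_replicate_append_of_not_split_cons (h : ¬Split a (a :: l)) :
    ∃ j s, l = replicate j a ++ s ∧ a ∉ s := by
  induction l with
  | nil => exact ⟨0, [], rfl, not_mem_nil⟩
  | cons c l ih =>
    by_cases hca : c = a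
    · subst hca
      obtain ⟨j, s, rfl, hs⟩ := ih fun h' => h (h'.mono (sublist_cons_self _ _))
      exact ⟨j + 1, s, by simp [replicate_succ], hs⟩
    · refine ⟨0, c :: l, rfl, ?_⟩
      rintro (_ | ⟨_, hal⟩)
      · exact hca rfl
      · exact h ⟨c, hca, (((singleton_sublist.2 hal).cons_cons c).cons_cons a)⟩

end Words

section Machine

variable {a x t : ℕ} {xs inp st s : List ℕ}

theorem phiAux_cons_of_not_hasABA (h : ¬HasABA (x :: st)) :
    phiAux (x :: xs) st = phiAux xs (x :: st) := by
  cases st with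
  | nil => rw [phiAux]
  | cons t st => rw [phiAux, if_neg h]

theorem phiAux_cons_cons_of_hasABA (h : HasABA (x :: t :: st)) :
    phiAux (x :: xs) (t :: st) = t :: phiAux (x :: xs) st := by
  rw [phiAux, if_pos h]

theorem phiAux_perm (inp st : List ℕ) : phiAux inp st ~ inp ++ st := by
  induction inp, st using phiAux.induct with
  | case1 st => rw [phiAux]; rfl
  | case2 x xs ih => rw [phiAux]; simpa using ih.trans (perm_append_singleton x xs)
  | case3 x xs t st h ih =>
    rw [phiAux_cons_cons_of_hasABA h]
    exact (ih.cons t).trans ((Perm.swap x t _).trans (perm_middle.symm.cons x))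
  | case4 x xs t st h ih =>
    rw [phiAux_cons_of_not_hasABA h]
    exact ih.trans (by simp [perm_middle])

theorem phiAux_replicate_append (hxa : x ≠ a) (hx : x ∈ s) (j : ℕ) :
    phiAux (x :: xs) (replicate j a ++ s) = replicate j a ++ phiAux (x :: xs) s := by
  induction j with
  | zero => rfl
  | succ j ih =>
    have hpop : HasABA (x :: a :: (replicate j a ++ s)) :=
      hasABA_cons_cons_iff.2 (Or.inr ⟨hxa, mem_append_right _ hx⟩)
    rw [replicate_succ, cons_append, phiAux_cons_cons_of_hasABA hpop, ih, cons_append]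

theorem phiAux_append_of_not_hasABA (u : List ℕ) (h : ¬HasABA (u.reverse ++ st)) :
    phiAux (u ++ inp) st = phiAux inp (u.reverse ++ st) := by
  induction u generalizing st with
  | nil => rfl
  | cons c u ih =>
    have hc : ¬HasABA (c :: st) := fun hc => h (hc.mono (by simp))
    rw [cons_append, phiAux_cons_of_not_hasABA hc, ih (by simpa using h)]
    simp

theorem phiAux_append_of_forall_notMem {st₀ : List ℕ} (h₀ : ∀ c ∈ st₀, c ∉ inp)
    (h : ¬HasABA (st ++ st₀)) : phiAux inp (st ++ st₀) = phiAux inp st ++ st₀ := by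
  induction inp, st using phiAux.induct with
  | case1 st => rw [phiAux, phiAux]
  | case2 x xs ih =>
    have hx : x ∉ st₀ := fun hx => h₀ x hx mem_cons_self
    rw [nil_append, phiAux_cons_of_not_hasABA (not_hasABA_cons hx h), phiAux,
      ← ih (fun c hc hcx => h₀ c hc (mem_cons_of_mem x hcx)) (not_hasABA_cons hx h)]
    rfl
  | case3 x xs t st hpop ih =>
    rw [cons_append, phiAux_cons_cons_of_hasABA (hpop.mono (by simp)),
      phiAux_cons_cons_of_hasABA hpop, ih h₀ fun h' => h (h'.mono (sublist_cons_self _ _)),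
      cons_append]
  | case4 x xs t st hpush ih =>
    have hpush' : ¬HasABA (x :: t :: (st ++ st₀)) := by
      rw [hasABA_cons_cons_iff]
      rintro (h' | ⟨hxt, hx⟩)
      · exact h h'
      · refine hpush (hasABA_cons_cons_iff.2 (Or.inr ⟨hxt, ?_⟩))
        exact (mem_append.1 hx).resolve_right fun hx₀ => h₀ x hx₀ mem_cons_self
    rw [cons_append, phiAux_cons_of_not_hasABA hpush', phiAux_cons_of_not_hasABA hpush,
      ← ih (fun c hc hcx => h₀ c hc (mem_cons_of_mem x hcx)) hpush']
    rfl

/-- `st.reverse ++ inp`, the stack read bottom-up followed by the unread input, is a subword of the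
original word. -/
theorem not_split_phiAux (hst : ¬HasABA st) (h : ¬Split a (st.reverse ++ inp)) :
    ¬Split a (phiAux inp st) := by
  induction inp, st using phiAux.induct with
  | case1 st => rw [phiAux]; simpa [split_reverse_iff] using h
  | case2 x xs ih => rw [phiAux]; exact ih not_hasABA_singleton (by simpa using h)
  | case3 x xs t st hpop ih =>
    obtain ⟨hxt, hx⟩ := (hasABA_cons_cons_iff.1 hpop).resolve_left hst
    rw [phiAux_cons_cons_of_hasABA hpop]
    by_cases hta : t = a
    · subst hta
      obtain ⟨j, s, rfl, hts⟩ := exists_eq_replicate_append_of_not_split_cons fun ht =>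
        hst (hasABA_iff_exists_split.2 ⟨t, ht⟩)
      have hxs : x ∈ s := (mem_append.1 hx).resolve_left fun hx' => hxt (eq_of_mem_replicate hx')
      have hinp : t ∉ x :: xs := by
        rintro (_ | ⟨_, htxs⟩)
        · exact hxt rfl
        · refine h ⟨x, hxt, ?_⟩
          have : [t] ++ [x, t] <+ (replicate j t ++ s).reverse ++ [t] ++ x :: xs :=
            (singleton_sublist.2 (by simp)).append ((singleton_sublist.2 htxs).cons_cons x)
          simpa using this
      have hout : t ∉ phiAux (x :: xs) s := by
        rw [(phiAux_perm _ _).mem_iff, mem_append]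
        rintro (h' | h')
        exacts [hinp h', hts h']
      rw [phiAux_replicate_append hxt hxs]
      simpa [replicate_succ] using not_split_append_replicate_append not_mem_nil hout (j + 1)
    · rw [split_cons_iff]
      rintro (h' | ⟨rfl, -⟩)
      · refine ih (fun h'' => hst (h''.mono (sublist_cons_self _ _)))
          (fun h'' => h (h''.mono ?_)) h'
        simp
      · exact hta rfl
  | case4 x xs t st hpush ih =>
    rw [phiAux_cons_of_not_hasABA hpush]
    exact ih hpush (by simpa using h)

theorem exists_phiAux_eq_append_replicate (hst : ¬HasABA st) (hlast : st.getLast? = some a) :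
    ∃ w j, phiAux inp st = w ++ replicate j a ∧ a ∉ w := by
  induction inp, st using phiAux.induct with
  | case1 st =>
    obtain ⟨ys, rfl⟩ := getLast?_eq_some_iff.1 hlast
    have hys : ¬Split a (a :: ys.reverse) := fun h' =>
      hst (hasABA_reverse_iff.1 (hasABA_iff_exists_split.2 ⟨a, by simpa using h'⟩))
    obtain ⟨j, v, hv, hav⟩ := exists_eq_replicate_append_of_not_split_cons hys
    refine ⟨v.reverse, j + 1, ?_, by simpa using hav⟩
    rw [phiAux, ← reverse_reverse ys, hv]
    simp [replicate_succ']
  | case2 x xs ih => simp at hlast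
  | case3 x xs t st hpop ih =>
    obtain ⟨hxt, hx⟩ := (hasABA_cons_cons_iff.1 hpop).resolve_left hst
    obtain ⟨t', st', rfl⟩ := exists_cons_of_ne_nil (ne_nil_of_mem hx)
    rw [getLast?_cons_cons] at hlast
    obtain ⟨ys, hys⟩ := getLast?_eq_some_iff.1 hlast
    have hta : t ≠ a := by
      rintro rfl
      have hxys : x ∈ ys := by
        rw [hys, mem_append, mem_singleton] at hx
        exact hx.resolve_right hxt
      refine hst (hasABA_iff_exists_split.2 ⟨t, x, hxt, ?_⟩)
      rw [hys]
      exact ((singleton_sublist.2 hxys).append (Sublist.refl [t])).cons_cons t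
    obtain ⟨w, j, hw, haw⟩ := ih (fun h' => hst (h'.mono (sublist_cons_self _ _))) hlast
    refine ⟨t :: w, j, ?_, ?_⟩
    · rw [phiAux_cons_cons_of_hasABA hpop, hw, cons_append]
    · simp [Ne.symm hta, haw]
  | case4 x xs t st hpush ih =>
    rw [phiAux_cons_of_not_hasABA hpush]
    exact ih hpush (by simpa using hlast)

end Machine

theorem not_split_phi {a : ℕ} {p : List ℕ} (h : ¬Split a p) : ¬Split a (phi p) :=
  not_split_phiAux not_hasABA_nil (by simpa using h)

theorem exists_first_split {p : List ℕ} (h : HasABA p) :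
    ∃ u a rest, p = u ++ a :: rest ∧ Split a (a :: rest) ∧ ¬HasABA (u ++ [a]) ∧
      ∀ c ∈ u, c ∉ rest := by
  induction p with
  | nil => exact absurd h not_hasABA_nil
  | cons c p ih =>
    by_cases hc : Split c (c :: p)
    · exact ⟨[], c, p, rfl, hc, not_hasABA_singleton, by simp⟩
    have hc' : ∀ b ≠ c, ¬[b, c] <+ p := fun b hb hs => hc ⟨b, hb, hs.cons_cons c⟩
    obtain ⟨u, a, rest, rfl, ha, hu, hrest⟩ :=
      ih ((hasABA_cons_iff.1 h).resolve_right fun ⟨b, hb, hs⟩ => hc' b hb hs)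
    refine ⟨c :: u, a, rest, rfl, ha, ?_, ?_⟩
    · rw [cons_append, hasABA_cons_iff]
      rintro (h' | ⟨b, hb, hs⟩)
      · exact hu h'
      · exact hc' b hb (hs.trans (by simp))
    · rintro d (_ | ⟨_, hd⟩) hdr
      · by_cases hca : c = a
        · subst hca
          obtain ⟨b, hb, hs⟩ := ha
          exact hc' b hb (((sublist_cons_self _ _).trans hs).trans (sublist_append_right u _))
        · exact hc' a (Ne.symm hca) (((singleton_sublist.2 hdr).cons_cons a).trans (by simp))
      · exact hrest d hd hdr

theorem exists_split_not_split_phi {p : List ℕ} (h : HasABA p) :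
    ∃ a, Split a p ∧ ¬Split a (phi p) := by
  obtain ⟨u, a, rest, rfl, ha, hu, hrest⟩ := exists_first_split h
  refine ⟨a, ha.mono (sublist_append_right u _), ?_⟩
  have har : a ∈ rest := by
    obtain ⟨b, hb, hs⟩ := ha
    exact (cons_sublist_cons.1 hs).subset (by simp)
  have hau : a ∉ u.reverse := fun hau => hrest a (mem_reverse.1 hau) har
  have hstack : ¬HasABA ([a] ++ u.reverse) := by
    simpa [← hasABA_reverse_iff (l := u ++ [a])] using hu
  have hphi : phi (u ++ a :: rest) = phiAux rest [a] ++ u.reverse := by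
    rw [phi, ← singleton_append, ← append_assoc,
      phiAux_append_of_not_hasABA _ (by simpa using hstack), append_nil, reverse_concat,
      ← phiAux_append_of_forall_notMem (fun c hc => hrest c (mem_reverse.1 hc)) hstack]
    rfl
  obtain ⟨w, j, hw, haw⟩ :=
    exists_phiAux_eq_append_replicate (inp := rest) not_hasABA_singleton rfl
  rw [hphi, hw]
  exact not_split_append_replicate_append haw hau j

theorem sortedWord_iterate_phi (n : ℕ) (p : List ℕ) (S : Finset ℕ)
    (hS : ∀ a, Split a p → a ∈ S) (hn : S.card ≤ n) : SortedWord (phi^[n] p) := by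
  induction n generalizing p S with
  | zero =>
    rw [Function.iterate_zero_apply, sortedWord_iff_not_hasABA, hasABA_iff_exists_split]
    rintro ⟨a, ha⟩
    simpa [Finset.card_eq_zero.1 (Nat.le_zero.1 hn)] using hS a ha
  | succ n ih =>
    rw [Function.iterate_succ_apply]
    by_cases hp : HasABA p
    · obtain ⟨a, ha, ha'⟩ := exists_split_not_split_phi hp
      refine ih (phi p) (S.erase a) (fun b hb => Finset.mem_erase.2 ⟨?_, ?_⟩) ?_
      · rintro rfl; exact ha' hb
      · exact hS b (not_imp_not.1 not_split_phi hb)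
      · rw [Finset.card_erase_of_mem (hS a ha)]; omega
    · refine ih (phi p) ∅ (fun b hb => ?_) (by simp)
      exact absurd (hasABA_iff_exists_split.2 ⟨b, not_imp_not.1 not_split_phi hb⟩) hp

/-- Applying φ_{aba} at most N(p) times sorts any set partition word. -/
theorem stmt6 (p : List ℕ) : SortedWord (phi^[Nletters p] p) :=
  sortedWord_iterate_phi _ p p.toFinset (fun _ ha => mem_toFinset.2 ha.mem) le_rfl
end
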